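/- Let p be a norm on ℝⁿ that is weakly decomposable for an index set S ⊆ {1,…,n}, let X ∈ ℝ^{m×n}, ε ∈ ℝ^m with ε ≠ 0, and β⁰ ∈ ℝⁿ. Define λ₀ = p_*(Xᵀε)/‖ε‖ and λ_m = max{ (p^{S̄})_*((Xᵀε)^{S̄})/‖ε‖, p_*((Xᵀε)_S)/‖ε‖, (p^{S̄})_*((β⁰)^{S̄}), p_*((β⁰)_S) }. Then λ₀ ≤ λ_m and p_*(β⁰) ≤ λ_m. -/

import Mathlib

open scoped RealInnerProductSpace

noncomputable section

/-- A function `p` is a norm on a real vector space. -/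
def IsNorm {E : Type*} [AddCommGroup E] [Module ℝ E] (p : E → ℝ) : Prop :=
  (∀ x y, p (x + y) ≤ p x + p y) ∧ (∀ (c : ℝ) (x : E), p (c • x) = |c| * p x) ∧
    (∀ x, p x = 0 ↔ x = 0)

/-- The dual norm `q_*(z) = sup {⟨z, β⟩ : q β ≤ 1}`. -/
def dualNorm {ι : Type*} [Fintype ι] (q : EuclideanSpace ℝ ι → ℝ)
    (z : EuclideanSpace ℝ ι) : ℝ :=
  sSup {r : ℝ | ∃ β : EuclideanSpace ℝ ι, q β ≤ 1 ∧ r = ⟪z, β⟫}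

/-- `β_S`: the vector agreeing with `β` on `S` and zero on the complement. -/
def projS {n : ℕ} (S : Finset (Fin n)) (β : EuclideanSpace ℝ (Fin n)) :
    EuclideanSpace ℝ (Fin n) :=
  WithLp.toLp 2 (fun i => if i ∈ S then β i else 0)

/-- `β_{S̄}`: the vector agreeing with `β` on the complement of `S` and zero on `S`. -/
def projSc {n : ℕ} (S : Finset (Fin n)) (β : EuclideanSpace ℝ (Fin n)) :
    EuclideanSpace ℝ (Fin n) :=
  WithLp.toLp 2 (fun i => if i ∈ S then 0 else β i)

/-- `β^{S̄}`: the restriction of `β` to the complement of `S`. -/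
def restrC {n : ℕ} (S : Finset (Fin n)) (β : EuclideanSpace ℝ (Fin n)) :
    EuclideanSpace ℝ {i : Fin n // i ∉ S} :=
  WithLp.toLp 2 (fun j => β j.1)

/-- Matrix-vector multiplication as a map between Euclidean spaces. -/
def mulVecE {m n : ℕ} (X : Matrix (Fin m) (Fin n) ℝ) (β : EuclideanSpace ℝ (Fin n)) :
    EuclideanSpace ℝ (Fin m) :=
  WithLp.toLp 2 (X.mulVec β)

/-! Splitting `⟪z, β⟫ = ⟪z_S, β_S⟫ + ⟪z^{S̄}, β^{S̄}⟫` and bounding each term by a dual norm times a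
norm, weak decomposability `p β_S + p^{S̄} β^{S̄} ≤ p β ≤ 1` gives
`p_* z ≤ max ((p^{S̄})_* z^{S̄}) (p_* z_S)`. Applied to `z = Xᵀε` (divided by `‖ε‖`) and to `z = β⁰`
this is the theorem. -/

/-- A copy of `E` on which the norm `q` can be installed in place of the ambient one. -/
def NormedBy {E : Type*} (_q : E → ℝ) : Type _ := E

instance {E : Type*} [AddCommGroup E] (q : E → ℝ) : AddCommGroup (NormedBy q) :=
  inferInstanceAs (AddCommGroup E)

instance {E : Type*} [AddCommGroup E] [Module ℝ E] (q : E → ℝ) : Module ℝ (NormedBy q) :=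
  inferInstanceAs (Module ℝ E)

instance {E : Type*} [AddCommGroup E] [Module ℝ E] [Module.Finite ℝ E] (q : E → ℝ) :
    Module.Finite ℝ (NormedBy q) :=
  inferInstanceAs (Module.Finite ℝ E)

namespace IsNorm

variable {E : Type*} [AddCommGroup E] [Module ℝ E] {q : E → ℝ}

lemma map_zero (hq : IsNorm q) : q 0 = 0 := (hq.2.2 0).2 rfl

lemma map_neg (hq : IsNorm q) (x : E) : q (-x) = q x := by
  simpa using hq.2.1 (-1) x

lemma nonneg (hq : IsNorm q) (x : E) : 0 ≤ q x := by
  have h := hq.1 x (-x)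
  rw [add_neg_cancel, hq.map_zero, hq.map_neg] at h
  linarith

abbrev normedAddCommGroup (hq : IsNorm q) : NormedAddCommGroup (NormedBy q) :=
  AddGroupNorm.toNormedAddCommGroup
    { toFun := q
      map_zero' := hq.map_zero
      add_le' := hq.1
      neg' := hq.map_neg
      eq_zero_of_map_eq_zero' := fun x => (hq.2.2 x).1 }

end IsNorm

lemma IsNorm.exists_norm_le_mul {E : Type*} [NormedAddCommGroup E] [NormedSpace ℝ E]
    [FiniteDimensional ℝ E] {q : E → ℝ} (hq : IsNorm q) : ∃ C, 0 ≤ C ∧ ∀ x, ‖x‖ ≤ C * q x := by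
  let _ := hq.normedAddCommGroup
  let _ : NormedSpace ℝ (NormedBy q) := { norm_smul_le := fun c x => (hq.2.1 c x).le }
  let id : NormedBy q →L[ℝ] E := LinearMap.toContinuousLinearMap LinearMap.id
  exact ⟨‖id‖, norm_nonneg id, id.le_opNorm⟩

section DualNorm

variable {ι : Type*} [Fintype ι] {q : EuclideanSpace ℝ ι → ℝ}

lemma bddAbove_inner_of_le_one (hq : IsNorm q) (z : EuclideanSpace ℝ ι) :
    BddAbove {r : ℝ | ∃ β : EuclideanSpace ℝ ι, q β ≤ 1 ∧ r = ⟪z, β⟫} := by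
  obtain ⟨C, hC0, hC⟩ := hq.exists_norm_le_mul
  refine ⟨‖z‖ * C, ?_⟩
  rintro r ⟨β, hβ, rfl⟩
  have hCβ : ‖β‖ ≤ C := (hC β).trans (mul_le_of_le_one_right hC0 hβ)
  exact (real_inner_le_norm z β).trans (mul_le_mul_of_nonneg_left hCβ (norm_nonneg z))

lemma dualNorm_nonneg (hq : IsNorm q) (z : EuclideanSpace ℝ ι) : 0 ≤ dualNorm q z :=
  le_csSup (bddAbove_inner_of_le_one hq z) ⟨0, by simp [hq.map_zero]⟩

lemma inner_le_dualNorm (hq : IsNorm q) (z : EuclideanSpace ℝ ι) {β : EuclideanSpace ℝ ι}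
    (hβ : q β ≤ 1) : ⟪z, β⟫ ≤ dualNorm q z :=
  le_csSup (bddAbove_inner_of_le_one hq z) ⟨β, hβ, rfl⟩

lemma inner_le_dualNorm_mul (hq : IsNorm q) (z β : EuclideanSpace ℝ ι) :
    ⟪z, β⟫ ≤ dualNorm q z * q β := by
  rcases (hq.nonneg β).eq_or_lt with hβ0 | hβpos
  · simp [(hq.2.2 β).1 hβ0.symm, hq.map_zero]
  · have hunit : q ((q β)⁻¹ • β) ≤ 1 := by
      rw [hq.2.1, abs_of_pos (inv_pos.2 hβpos), inv_mul_cancel₀ hβpos.ne']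
    have h := inner_le_dualNorm hq z hunit
    rw [real_inner_smul_right, inv_mul_le_iff₀ hβpos, mul_comm] at h
    exact h

end DualNorm

lemma inner_eq_inner_projS_add_inner_restrC {n : ℕ} (S : Finset (Fin n))
    (z β : EuclideanSpace ℝ (Fin n)) :
    ⟪z, β⟫ = ⟪projS S z, projS S β⟫ + ⟪restrC S z, restrC S β⟫ := by
  have hS : ∀ i, (if i ∈ S then β i else 0) * (if i ∈ S then z i else 0) =
      if i ∈ S then β i * z i else 0 := fun i => by split_ifs <;> simp
  simp only [PiLp.inner_apply, RCLike.inner_apply, conj_trivial, projS, restrC, hS,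
    Finset.sum_ite_mem, Finset.univ_inter]
  rw [← Finset.sum_add_sum_compl S, Finset.sum_subtype Sᶜ (fun i => Finset.mem_compl)]

lemma dualNorm_le_max_of_weaklyDecomposable {n : ℕ} {S : Finset (Fin n)}
    {p : EuclideanSpace ℝ (Fin n) → ℝ} {psc : EuclideanSpace ℝ {i : Fin n // i ∉ S} → ℝ}
    (hp : IsNorm p) (hpsc : IsNorm psc)
    (hdec : ∀ β : EuclideanSpace ℝ (Fin n), p (projS S β) + psc (restrC S β) ≤ p β)
    (z : EuclideanSpace ℝ (Fin n)) :
    dualNorm p z ≤ max (dualNorm psc (restrC S z)) (dualNorm p (projS S z)) := by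
  set M := max (dualNorm psc (restrC S z)) (dualNorm p (projS S z))
  refine csSup_le ⟨0, 0, by simp [hp.map_zero]⟩ ?_
  rintro r ⟨β, hβ, rfl⟩
  calc ⟪z, β⟫ = ⟪projS S z, projS S β⟫ + ⟪restrC S z, restrC S β⟫ :=
        inner_eq_inner_projS_add_inner_restrC S z β
    _ ≤ dualNorm p (projS S z) * p (projS S β) + dualNorm psc (restrC S z) * psc (restrC S β) :=
        add_le_add (inner_le_dualNorm_mul hp _ _) (inner_le_dualNorm_mul hpsc _ _)
    _ ≤ M * p (projS S β) + M * psc (restrC S β) :=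
        add_le_add (mul_le_mul_of_nonneg_right (le_max_right _ _) (hp.nonneg _))
          (mul_le_mul_of_nonneg_right (le_max_left _ _) (hpsc.nonneg _))
    _ = M * (p (projS S β) + psc (restrC S β)) := (mul_add _ _ _).symm
    _ ≤ M * 1 :=
        mul_le_mul_of_nonneg_left ((hdec β).trans hβ)
          ((dualNorm_nonneg hpsc _).trans (le_max_left _ _))
    _ = M := mul_one M

theorem lambda_zero_le_lambda_m_general {m n : ℕ} (S : Finset (Fin n))
    (p : EuclideanSpace ℝ (Fin n) → ℝ)
    (psc : EuclideanSpace ℝ {i : Fin n // i ∉ S} → ℝ)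
    (hp : IsNorm p) (hpsc : IsNorm psc)
    (hdec : ∀ β : EuclideanSpace ℝ (Fin n), p (projS S β) + psc (restrC S β) ≤ p β)
    (X : Matrix (Fin m) (Fin n) ℝ) (ε : EuclideanSpace ℝ (Fin m))
    (β0 : EuclideanSpace ℝ (Fin n))
    (lam0 lamm : ℝ)
    (hlam0 : lam0 = dualNorm p (mulVecE X.transpose ε) / ‖ε‖)
    (hlamm : lamm = max (max (dualNorm psc (restrC S (mulVecE X.transpose ε)) / ‖ε‖)
                          (dualNorm p (projS S (mulVecE X.transpose ε)) / ‖ε‖))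
                      (max (dualNorm psc (restrC S β0)) (dualNorm p (projS S β0)))) :
    lam0 ≤ lamm ∧ dualNorm p β0 ≤ lamm := by
  have hdual := dualNorm_le_max_of_weaklyDecomposable hp hpsc hdec
  subst hlam0 hlamm
  refine ⟨?_, (hdual β0).trans (le_max_right _ _)⟩
  calc dualNorm p (mulVecE X.transpose ε) / ‖ε‖
      ≤ max (dualNorm psc (restrC S (mulVecE X.transpose ε)))
          (dualNorm p (projS S (mulVecE X.transpose ε))) / ‖ε‖ :=
        div_le_div_of_nonneg_right (hdual _) (norm_nonneg ε)
    _ = max (dualNorm psc (restrC S (mulVecE X.transpose ε)) / ‖ε‖)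
          (dualNorm p (projS S (mulVecE X.transpose ε)) / ‖ε‖) :=
        (max_div_div_right (norm_nonneg ε) _ _).symm
    _ ≤ _ := le_max_left _ _

/-- `λ₀ ≤ λ_m` and `p_*(β⁰) ≤ λ_m`. -/
theorem lambda_zero_le_lambda_m {m n : ℕ} (S : Finset (Fin n))
    (p : EuclideanSpace ℝ (Fin n) → ℝ)
    (psc : EuclideanSpace ℝ {i : Fin n // i ∉ S} → ℝ)
    (hp : IsNorm p) (hpsc : IsNorm psc)
    (hdec : ∀ β : EuclideanSpace ℝ (Fin n), p (projS S β) + psc (restrC S β) ≤ p β)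
    (X : Matrix (Fin m) (Fin n) ℝ) (ε : EuclideanSpace ℝ (Fin m)) (hε : ε ≠ 0)
    (β0 : EuclideanSpace ℝ (Fin n))
    (lam0 lamm : ℝ)
    (hlam0 : lam0 = dualNorm p (mulVecE X.transpose ε) / ‖ε‖)
    (hlamm : lamm = max (max (dualNorm psc (restrC S (mulVecE X.transpose ε)) / ‖ε‖)
                          (dualNorm p (projS S (mulVecE X.transpose ε)) / ‖ε‖))
                      (max (dualNorm psc (restrC S β0)) (dualNorm p (projS S β0)))) :
    lam0 ≤ lamm ∧ dualNorm p β0 ≤ lamm :=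
  lambda_zero_le_lambda_m_general S p psc hp hpsc hdec X ε β0 lam0 lamm hlam0 hlamm

end
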